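/- Let V be a finite index set and (A, S, B) a partition of V with A, S, B nonempty. Let μ ∈ ℝ^V and let Σ be a symmetric positive definite V×V real matrix whose inverse has zero (A,B) block, i.e. (Σ⁻¹)_{a b} = 0 for all a ∈ A, b ∈ B. Then for every x ∈ ℝ^V, f(x; μ, Σ) = f(x_{A∪S}; μ_{A∪S}, Σ_{A∪S}) · f(x_B; μ_B + Σ_{B,S} Σ_S⁻¹ (x_S − μ_S), Σ_B − Σ_{B,S} Σ_S⁻¹ Σ_{S,B}). That is, the joint Gaussian density factorizes into the marginal density on A ∪ S times the conditional density of the B-coordinates given only the S-coordinates. -/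

import Mathlib

/-!
Reindex `V` as `(A ⊕ S) ⊕ B` and write `C = A ∪ S`. Completing the square with the Schur
complement `D` of the block `Σ_C` factors any Gaussian density into the marginal density on `C`
times a Gaussian density in `x_B` with mean `μ_B + Σ_{B,C} Σ_C⁻¹ (x_C − μ_C)` and covariance `D`.
The block-inverse formula gives `Σ_{B,C} Σ_C⁻¹ = −D (Σ⁻¹)_{B,C}`, so the regression coefficients
vanish on the columns in `A`; multiplying back by `Σ_C` then forces them to be `Σ_{B,S} Σ_S⁻¹` on
the columns in `S`.
-/

open Matrix

/-- The Gaussian density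
`f(x; μ, Σ) = (2π)^(−|I|/2) (det Σ)^(−1/2) exp(−(1/2)(x−μ)ᵀ Σ⁻¹ (x−μ))`. -/
noncomputable def gauss {I : Type*} [Fintype I] [DecidableEq I]
    (μ : I → ℝ) (S : Matrix I I ℝ) (x : I → ℝ) : ℝ :=
  (2 * Real.pi) ^ (-(Fintype.card I : ℝ) / 2) * S.det ^ (-(1 : ℝ) / 2) *
    Real.exp (-(1 / 2 : ℝ) * ((x - μ) ⬝ᵥ (S⁻¹ *ᵥ (x - μ))))

/-- Sub-matrix of `M` with rows indexed by `A` and columns indexed by `B`. -/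
def msub {V : Type*} [Fintype V] [DecidableEq V] (M : Matrix V V ℝ) (A B : Finset V) :
    Matrix A B ℝ :=
  M.submatrix (fun a => a.1) (fun b => b.1)

/-- Principal sub-matrix of `M` indexed by the finset `A`. -/
def psub {V : Type*} [Fintype V] [DecidableEq V] (M : Matrix V V ℝ) (A : Finset V) :
    Matrix A A ℝ :=
  msub M A A

/-- Sub-vector of `x` indexed by the finset `A`. -/
def rest {V : Type*} (x : V → ℝ) (A : Finset V) : A → ℝ := fun a => x a.1

theorem Matrix.PosDef.transpose_eq {ι : Type*} {M : Matrix ι ι ℝ} (hM : M.PosDef) : Mᵀ = M := by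
  rw [← conjTranspose_eq_transpose_of_trivial, hM.isHermitian.eq]

section Blocks

variable {m n : Type*}

namespace Matrix.PosDef

variable {M : Matrix (m ⊕ n) (m ⊕ n) ℝ}

theorem toBlocks₁₁ (hM : M.PosDef) : M.toBlocks₁₁.PosDef :=
  hM.submatrix Sum.inl_injective

theorem toBlocks₂₂ (hM : M.PosDef) : M.toBlocks₂₂.PosDef :=
  hM.submatrix Sum.inr_injective

theorem toBlocks₂₁_eq_transpose (hM : M.PosDef) : M.toBlocks₂₁ = M.toBlocks₁₂ᵀ := by
  ext i j
  simpa [toBlocks₂₁, toBlocks₁₂] using hM.isHermitian.apply (Sum.inl j) (Sum.inr i)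

end Matrix.PosDef

variable [Fintype m] [Fintype n] [DecidableEq m] [DecidableEq n]

theorem gauss_submatrix_equiv (e : m ≃ n) (μ : n → ℝ) (M : Matrix n n ℝ) (x : n → ℝ) :
    gauss μ M x = gauss (μ ∘ e) (M.submatrix e e) (x ∘ e) := by
  have hquad : (x ∘ e - μ ∘ e) ⬝ᵥ (M.submatrix e e)⁻¹ *ᵥ (x ∘ e - μ ∘ e)
      = (x - μ) ⬝ᵥ M⁻¹ *ᵥ (x - μ) := by
    rw [inv_submatrix_equiv, ← Pi.sub_comp, submatrix_mulVec_equiv, Function.comp_assoc,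
      e.self_comp_symm, Function.comp_id, comp_equiv_dotProduct_comp_equiv]
  simp only [gauss, Fintype.card_congr e, det_submatrix_equiv_self, hquad]

/-- For a covariance matrix `M`, the conditional covariance of the second block of coordinates
given the first. -/
noncomputable def schurCompl (M : Matrix (m ⊕ n) (m ⊕ n) ℝ) : Matrix n n ℝ :=
  M.toBlocks₂₂ - M.toBlocks₂₁ * M.toBlocks₁₁⁻¹ * M.toBlocks₁₂

namespace Matrix.PosDef

variable {M : Matrix (m ⊕ n) (m ⊕ n) ℝ}

theorem det_eq_det_toBlocks₁₁_mul_det_schurCompl (hM : M.PosDef) :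
    M.det = M.toBlocks₁₁.det * (schurCompl M).det := by
  have := hM.toBlocks₁₁.isUnit.invertible
  conv_lhs => rw [← fromBlocks_toBlocks M]
  rw [det_fromBlocks₁₁, invOf_eq_nonsing_inv, schurCompl]

theorem det_schurCompl_pos (hM : M.PosDef) : 0 < (schurCompl M).det :=
  pos_of_mul_pos_right (hM.det_eq_det_toBlocks₁₁_mul_det_schurCompl ▸ hM.det_pos)
    hM.toBlocks₁₁.det_pos.le

theorem inv_eq_fromBlocks (hM : M.PosDef) :
    M⁻¹ = fromBlocks
      (M.toBlocks₁₁⁻¹ + M.toBlocks₁₁⁻¹ * M.toBlocks₁₂ * (schurCompl M)⁻¹ * M.toBlocks₂₁ *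
        M.toBlocks₁₁⁻¹)
      (-(M.toBlocks₁₁⁻¹ * M.toBlocks₁₂ * (schurCompl M)⁻¹))
      (-((schurCompl M)⁻¹ * M.toBlocks₂₁ * M.toBlocks₁₁⁻¹)) (schurCompl M)⁻¹ := by
  have := hM.toBlocks₁₁.isUnit.invertible
  have : Invertible (M.toBlocks₂₂ - M.toBlocks₂₁ * ⅟M.toBlocks₁₁ * M.toBlocks₁₂) := by
    rw [invOf_eq_nonsing_inv]
    exact invertibleOfIsUnitDet _ hM.det_schurCompl_pos.ne'.isUnit
  have := hM.isUnit.invertible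
  rw [← fromBlocks_toBlocks M] at this ⊢
  rw [← invOf_eq_nonsing_inv, invOf_fromBlocks₁₁_eq]
  simp only [invOf_eq_nonsing_inv, schurCompl, toBlocks_fromBlocks₁₁, toBlocks_fromBlocks₁₂,
    toBlocks_fromBlocks₂₁, toBlocks_fromBlocks₂₂]

theorem dotProduct_inv_mulVec_sumElim (hM : M.PosDef) (v₁ : m → ℝ) (v₂ : n → ℝ) :
    Sum.elim v₁ v₂ ⬝ᵥ M⁻¹ *ᵥ Sum.elim v₁ v₂ =
      v₁ ⬝ᵥ M.toBlocks₁₁⁻¹ *ᵥ v₁ +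
        (v₂ - (M.toBlocks₂₁ * M.toBlocks₁₁⁻¹) *ᵥ v₁) ⬝ᵥ
          (schurCompl M)⁻¹ *ᵥ (v₂ - (M.toBlocks₂₁ * M.toBlocks₁₁⁻¹) *ᵥ v₁) := by
  set a := (M.toBlocks₂₁ * M.toBlocks₁₁⁻¹) *ᵥ v₁
  set u := (schurCompl M)⁻¹ *ᵥ (v₂ - a)
  have hinv : M⁻¹ *ᵥ Sum.elim v₁ v₂ =
      Sum.elim (M.toBlocks₁₁⁻¹ *ᵥ v₁ - (M.toBlocks₁₁⁻¹ * M.toBlocks₁₂) *ᵥ u) u := by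
    rw [hM.inv_eq_fromBlocks, fromBlocks_mulVec]
    congr 1
    · simp only [u, a, Sum.elim_comp_inl, Sum.elim_comp_inr, add_mulVec, neg_mulVec, mulVec_sub,
        mulVec_mulVec, Matrix.mul_assoc]
      abel
    · simp only [u, a, Sum.elim_comp_inl, Sum.elim_comp_inr, neg_mulVec, mulVec_sub,
        mulVec_mulVec, Matrix.mul_assoc]
      abel
  have hcross : v₁ ⬝ᵥ (M.toBlocks₁₁⁻¹ * M.toBlocks₁₂) *ᵥ u = a ⬝ᵥ u := by
    rw [dotProduct_mulVec, ← mulVec_transpose, transpose_mul, hM.toBlocks₁₁.inv.transpose_eq,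
      ← hM.toBlocks₂₁_eq_transpose]
  rw [hinv, sumElim_dotProduct_sumElim, dotProduct_sub, hcross, sub_dotProduct]
  abel

theorem toBlocks₂₁_mul_inv_toBlocks₁₁ (hM : M.PosDef) :
    M.toBlocks₂₁ * M.toBlocks₁₁⁻¹ = -(schurCompl M * M⁻¹.toBlocks₂₁) := by
  have hD : IsUnit (schurCompl M).det := hM.det_schurCompl_pos.ne'.isUnit
  rw [hM.inv_eq_fromBlocks, toBlocks_fromBlocks₂₁, Matrix.mul_neg, neg_neg, ← Matrix.mul_assoc,
    ← Matrix.mul_assoc, mul_nonsing_inv _ hD, Matrix.one_mul]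

end Matrix.PosDef

theorem gauss_eq_mul_gauss_schurCompl {M : Matrix (m ⊕ n) (m ⊕ n) ℝ} (hM : M.PosDef)
    (μ x : m ⊕ n → ℝ) :
    gauss μ M x = gauss (μ ∘ Sum.inl) M.toBlocks₁₁ (x ∘ Sum.inl) *
      gauss (μ ∘ Sum.inr + (M.toBlocks₂₁ * M.toBlocks₁₁⁻¹) *ᵥ (x ∘ Sum.inl - μ ∘ Sum.inl))
        (schurCompl M) (x ∘ Sum.inr) := by
  have hsplit : x - μ = Sum.elim (x ∘ Sum.inl - μ ∘ Sum.inl) (x ∘ Sum.inr - μ ∘ Sum.inr) :=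
    (Sum.elim_comp_inl_inr _).symm
  have hcard : -(Fintype.card (m ⊕ n) : ℝ) / 2 =
      -(Fintype.card m : ℝ) / 2 + -(Fintype.card n : ℝ) / 2 := by
    rw [Fintype.card_sum]; push_cast; ring
  simp only [gauss, hsplit, hM.dotProduct_inv_mulVec_sumElim, sub_add_eq_sub_sub, hcard,
    hM.det_eq_det_toBlocks₁₁_mul_det_schurCompl,
    Real.mul_rpow hM.toBlocks₁₁.det_pos.le hM.det_schurCompl_pos.le,
    Real.rpow_add (by positivity : (0 : ℝ) < 2 * Real.pi), mul_add, Real.exp_add]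
  ring

end Blocks

theorem Matrix.PosDef.toBlocks₂₁_mul_inv_toBlocks₁₁_eq_fromCols_zero {a s b : Type*} [Fintype a]
    [Fintype s] [Fintype b] [DecidableEq a] [DecidableEq s] [DecidableEq b]
    {M : Matrix ((a ⊕ s) ⊕ b) ((a ⊕ s) ⊕ b) ℝ} (hM : M.PosDef)
    (hK : ∀ i j, M⁻¹ (Sum.inl (Sum.inl i)) (Sum.inr j) = 0) :
    M.toBlocks₂₁ * M.toBlocks₁₁⁻¹ =
      fromCols 0 (M.toBlocks₂₁.toCols₂ * M.toBlocks₁₁.toBlocks₂₂⁻¹) := by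
  have hK₁ : M⁻¹.toBlocks₂₁.toCols₁ = 0 := by
    ext j i
    exact (congrFun₂ hM.inv.transpose_eq _ _).trans (hK i j)
  obtain ⟨Y, hY⟩ : ∃ Y, M.toBlocks₂₁ * M.toBlocks₁₁⁻¹ = fromCols 0 Y :=
    ⟨_, by rw [hM.toBlocks₂₁_mul_inv_toBlocks₁₁, ← fromCols_toCols M⁻¹.toBlocks₂₁, hK₁,
      mul_fromCols, Matrix.mul_zero, fromCols_neg, neg_zero]⟩
  have := hM.toBlocks₁₁.isUnit.invertible
  have := hM.toBlocks₁₁.toBlocks₂₂.isUnit.invertible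
  have hYP : Y * M.toBlocks₁₁.toBlocks₂₂ = M.toBlocks₂₁.toCols₂ := by
    have h := congrArg toCols₂ (mul_inv_eq_iff_eq_mul_of_invertible _ _ _ |>.mp hY)
    rwa [← fromBlocks_toBlocks M.toBlocks₁₁, fromCols_mul_fromBlocks, toCols₂_fromCols,
      Matrix.zero_mul, zero_add, eq_comm] at h
  rw [hY, ← hYP, mul_inv_cancel_right_of_invertible]

def Finset.partitionEquiv {V : Type*} [Fintype V] [DecidableEq V] (A S B : Finset V)
    (hAS : Disjoint A S) (hCB : Disjoint (A ∪ S) B) (hcover : A ∪ S ∪ B = Finset.univ) :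
    (A ⊕ S) ⊕ B ≃ V :=
  ((Equiv.Finset.union A S hAS).sumCongr (Equiv.refl B)).trans <|
    (Equiv.Finset.union (A ∪ S) B hCB).trans <|
      Equiv.subtypeUnivEquiv fun v => hcover ▸ Finset.mem_univ v

theorem stmt_5_general {V : Type*} [Fintype V] [DecidableEq V]
    (A S B : Finset V)
    (hAS : Disjoint A S) (hAB : Disjoint A B) (hSB : Disjoint S B)
    (hcover : A ∪ S ∪ B = Finset.univ)
    (μ : V → ℝ) (Sg : Matrix V V ℝ) (hpd : Sg.PosDef)
    (hzero : ∀ a ∈ A, ∀ b ∈ B, Sg⁻¹ a b = 0) :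
    ∀ x : V → ℝ,
      gauss μ Sg x =
        gauss (rest μ (A ∪ S)) (psub Sg (A ∪ S)) (rest x (A ∪ S)) *
          gauss (rest μ B + (msub Sg B S * (psub Sg S)⁻¹) *ᵥ (rest x S - rest μ S))
            (psub Sg B - msub Sg B S * (psub Sg S)⁻¹ * msub Sg S B) (rest x B) := by
  intro x
  set e := Finset.partitionEquiv A S B hAS (Finset.disjoint_union_left.mpr ⟨hAB, hSB⟩) hcover
  have hM : (Sg.submatrix e e).PosDef := hpd.submatrix e.injective
  have hK : ∀ i j, (Sg.submatrix e e)⁻¹ (Sum.inl (Sum.inl i)) (Sum.inr j) = 0 := fun i j => by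
    rw [inv_submatrix_equiv]
    exact hzero _ i.2 _ j.2
  have hreg := hM.toBlocks₂₁_mul_inv_toBlocks₁₁_eq_fromCols_zero hK
  rw [gauss_submatrix_equiv e, gauss_eq_mul_gauss_schurCompl hM, hreg,
    gauss_submatrix_equiv (Equiv.Finset.union A S hAS) (rest μ _)]
  congr 2
  · simp only [fromCols_mulVec, zero_mulVec, zero_add]
    rfl
  · rw [schurCompl, hreg, ← fromRows_toRows (Sg.submatrix e e).toBlocks₁₂, fromCols_mul_fromRows,
      Matrix.zero_mul, zero_add]
    rfl

/-- For a partition `(A, S, B)` of `V` with `A, S, B` nonempty and `Σ` symmetric positive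
definite whose inverse has zero `(A,B)` block, the joint Gaussian density factorizes as
`f(x; μ, Σ) = f(x_{A∪S}; μ_{A∪S}, Σ_{A∪S}) · f(x_B; μ_B + Σ_{B,S} Σ_S⁻¹ (x_S − μ_S),
Σ_B − Σ_{B,S} Σ_S⁻¹ Σ_{S,B})`: the marginal density on `A ∪ S` times the conditional
density of the `B`-coordinates given only the `S`-coordinates. -/
theorem stmt_5 {V : Type*} [Fintype V] [DecidableEq V]
    (A S B : Finset V) (hA : A.Nonempty) (hS : S.Nonempty) (hB : B.Nonempty)
    (hAS : Disjoint A S) (hAB : Disjoint A B) (hSB : Disjoint S B)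
    (hcover : A ∪ S ∪ B = Finset.univ)
    (μ : V → ℝ) (Sg : Matrix V V ℝ) (hsym : Sg.IsSymm) (hpd : Sg.PosDef)
    (hzero : ∀ a ∈ A, ∀ b ∈ B, Sg⁻¹ a b = 0) :
    ∀ x : V → ℝ,
      gauss μ Sg x =
        gauss (rest μ (A ∪ S)) (psub Sg (A ∪ S)) (rest x (A ∪ S)) *
          gauss (rest μ B + (msub Sg B S * (psub Sg S)⁻¹) *ᵥ (rest x S - rest μ S))
            (psub Sg B - msub Sg B S * (psub Sg S)⁻¹ * msub Sg S B) (rest x B) :=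
  stmt_5_general A S B hAS hAB hSB hcover μ Sg hpd hzero
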